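/- Let 𝒢 be a GRN with associated PRN ℛ, and let σ, τ be two distinct appendage nodes of 𝒢. Then σ and τ are path-equivalent in the appendage subnetwork of 𝒢 if and only if the four nodes (σ,R), (σ,P), (τ,R), (τ,P) are pairwise path-equivalent in the appendage subnetwork of ℛ. -/

import Mathlib

open List Relation

/- In the PRN on `V × Bool`, the node `(v, false)` is the mRNA node `v^R`
   and `(v, true)` is the protein node `v^P`. -/

/-- Arrow relation of the PRN associated to a GRN with arrow relation `E`:
arrows `(v,R) → (v,P)` for every `v`, and `(u,P) → (v,R)` whenever `E u v`. -/
def prnAdj {V : Type*} (E : V → V → Prop) : V × Bool → V × Bool → Prop :=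
  fun a b =>
    (a.1 = b.1 ∧ a.2 = false ∧ b.2 = true) ∨
    (E a.1 b.1 ∧ a.2 = true ∧ b.2 = false)

/-- The lift of a path `σ₁ → ⋯ → σ_m` in the GRN to the path
`(σ₁,R) → (σ₁,P) → ⋯ → (σ_m,R) → (σ_m,P)` in the PRN. -/
def liftPath {V : Type*} (l : List V) : List (V × Bool) :=
  l.flatMap fun v => [(v, false), (v, true)]

/-- A simple path: a nonempty directed path visiting each node at most once. -/
def IsSimplePath {V : Type*} (E : V → V → Prop) (l : List V) : Prop :=
  l ≠ [] ∧ l.Chain' E ∧ l.Nodup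

/-- A simple path from `a` to `b`. -/
def IsSimplePathFrom {V : Type*} (E : V → V → Prop) (a b : V) (l : List V) : Prop :=
  IsSimplePath E l ∧ l.head? = some a ∧ l.getLast? = some b

/-- A node is simple if it lies on some simple path from the input to the output. -/
def IsSimpleNode {V : Type*} (E : V → V → Prop) (ι o v : V) : Prop :=
  ∃ l, IsSimplePathFrom E ι o l ∧ v ∈ l

/-- A node is super-simple if it lies on every simple path from the input to the output. -/
def IsSuperSimpleNode {V : Type*} (E : V → V → Prop) (ι o v : V) : Prop :=
  ∀ l, IsSimplePathFrom E ι o l → v ∈ l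

/-- A node is appendage if it lies on no simple path from the input to the output. -/
def IsAppendageNode {V : Type*} (E : V → V → Prop) (ι o v : V) : Prop :=
  ¬ IsSimpleNode E ι o v

/-- An appendage path from `a` to `b`: a simple path from `a` to `b` each of whose
nodes, except possibly `a` and `b`, is an appendage node. -/
def IsAppendagePath {V : Type*} (E : V → V → Prop) (ι o a b : V) (l : List V) : Prop :=
  IsSimplePathFrom E a b l ∧ ∀ v ∈ l, v ≠ a → v ≠ b → IsAppendageNode E ι o v

/-- A directed cycle: a nonempty closed directed walk visiting each of its nodes
exactly once (a self-loop is a cycle of length one). -/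
def IsCycle {V : Type*} (E : V → V → Prop) (c : List V) : Prop :=
  c ≠ [] ∧ c.Chain' E ∧ c.Nodup ∧
    ∃ a b, c.head? = some a ∧ c.getLast? = some b ∧ E b a

/-- Arrow relation of the appendage subnetwork: the induced subgraph on appendage nodes. -/
def appendageAdj {V : Type*} (E : V → V → Prop) (ι o : V) : V → V → Prop :=
  fun a b => E a b ∧ IsAppendageNode E ι o a ∧ IsAppendageNode E ι o b

/-- Two appendage nodes are path-equivalent if each is reachable from the other by a
directed path lying entirely within the appendage subnetwork. -/
def PathEquiv {V : Type*} (E : V → V → Prop) (ι o a b : V) : Prop :=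
  Relation.ReflTransGen (appendageAdj E ι o) a b ∧
  Relation.ReflTransGen (appendageAdj E ι o) b a

/-- A node `x` is between `a` and `b` if some input-to-output simple path visits
`a`, `x`, `b` in that order. -/
def Between {V : Type*} (E : V → V → Prop) (ι o a x b : V) : Prop :=
  ∃ l, IsSimplePathFrom E ι o l ∧ [a, x, b].Sublist l

/-!
A simple path of the PRN from `(ι,R)` to `(o,P)` is forced to alternate `(v,R) → (v,P) → (w,R)`,
so it is the lift of a simple path of the GRN from `ι` to `o`; hence `(v,R)` and `(v,P)` are
appendage exactly when `v` is. Consequently the appendage subnetwork of the PRN projects onto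
that of the GRN, and an appendage path `σ → c → ⋯ → τ` of the GRN lifts to
`(σ,P) → (c,R) → (c,P) → ⋯ → (τ,R)`. Since `σ ≠ τ`, the appendage cycle through `σ` and `τ` is
nonempty, and it lifts to the cycle `(σ,R) → (σ,P) → ⋯ → (τ,R) → (τ,P) → ⋯ → (σ,R)`.
-/

open Relation

section

variable {V : Type*} {E : V → V → Prop} {ι o : V}

@[simp]
lemma liftPath_nil : liftPath ([] : List V) = [] := rfl

@[simp]
lemma liftPath_cons (v : V) (l : List V) :
    liftPath (v :: l) = (v, false) :: (v, true) :: liftPath l := rfl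

@[simp]
lemma liftPath_eq_nil {l : List V} : liftPath l = [] ↔ l = [] := by
  cases l <;> simp

@[simp]
lemma mem_liftPath {l : List V} {v : V} {b : Bool} : (v, b) ∈ liftPath l ↔ v ∈ l := by
  induction l with
  | nil => simp
  | cons w t ih => cases b <;> simp_all

lemma head?_liftPath (l : List V) :
    (liftPath l).head? = l.head?.map fun v => (v, false) := by
  cases l <;> rfl

lemma getLast?_liftPath : ∀ l : List V,
    (liftPath l).getLast? = l.getLast?.map fun v => (v, true)
  | [] => rfl
  | [_] => rfl
  | v :: w :: t => by
    rw [liftPath_cons v, liftPath_cons w, getLast?_cons_cons, getLast?_cons_cons,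
      ← liftPath_cons w, getLast?_liftPath (w :: t), getLast?_cons_cons]

lemma isChain_liftPath_iff : ∀ {l : List V}, IsChain (prnAdj E) (liftPath l) ↔ IsChain E l
  | [] => by simp
  | [v] => by simp [prnAdj]
  | v :: w :: t => by
    rw [liftPath_cons v, liftPath_cons w, isChain_cons_cons, isChain_cons_cons,
      ← liftPath_cons w, isChain_liftPath_iff, isChain_cons_cons]
    simp [prnAdj]

@[simp]
lemma nodup_liftPath_iff {l : List V} : (liftPath l).Nodup ↔ l.Nodup := by
  induction l with
  | nil => simp
  | cons v t ih => simp [ih]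

lemma exists_liftPath_eq : ∀ {L : List (V × Bool)} {a w : V}, IsChain (prnAdj E) L →
    L.head? = some (a, false) → L.getLast? = some (w, true) → ∃ l, liftPath l = L
  | [], _, _, _, hhead, _ => by simp at hhead
  | [_], _, _, _, hhead, hlast => by simp_all
  | [x, y], a, _, _, hhead, hlast => by
    simp only [head?_cons, getLast?_cons_cons, getLast?_singleton, Option.some.injEq] at hhead hlast
    subst hhead hlast
    exact ⟨[a], by simp_all [prnAdj]⟩
  | x :: y :: z :: rest, a, w, hchain, hhead, hlast => by
    simp only [head?_cons, Option.some.injEq] at hhead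
    subst hhead
    rw [isChain_cons_cons, isChain_cons_cons] at hchain
    obtain ⟨hxy, hyz, hrest⟩ := hchain
    obtain rfl : y = (a, true) := by
      rcases hxy with ⟨h1, -, h3⟩ | ⟨-, h2, -⟩
      · exact Prod.ext h1.symm h3
      · simp at h2
    obtain ⟨c, rfl⟩ : ∃ c, z = (c, false) := by
      rcases hyz with ⟨-, h2, -⟩ | ⟨-, -, h3⟩
      · simp at h2
      · exact ⟨z.1, Prod.ext rfl h3⟩
    rw [getLast?_cons_cons, getLast?_cons_cons] at hlast
    obtain ⟨l, hl⟩ := exists_liftPath_eq hrest rfl hlast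
    exact ⟨a :: l, by rw [liftPath_cons, hl]⟩

lemma isSimplePathFrom_liftPath_iff {l : List V} {a b : V} :
    IsSimplePathFrom (prnAdj E) (a, false) (b, true) (liftPath l) ↔ IsSimplePathFrom E a b l := by
  refine and_congr (and_congr liftPath_eq_nil.not (and_congr isChain_liftPath_iff
    nodup_liftPath_iff)) (and_congr ?_ ?_) <;> simp [head?_liftPath, getLast?_liftPath]

lemma isSimpleNode_prnAdj_iff {v : V} {b : Bool} :
    IsSimpleNode (prnAdj E) (ι, false) (o, true) (v, b) ↔ IsSimpleNode E ι o v := by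
  constructor
  · rintro ⟨L, hL, hmem⟩
    obtain ⟨l, rfl⟩ := exists_liftPath_eq hL.1.2.1 hL.2.1 hL.2.2
    exact ⟨l, isSimplePathFrom_liftPath_iff.1 hL, mem_liftPath.1 hmem⟩
  · rintro ⟨l, hl, hmem⟩
    exact ⟨liftPath l, isSimplePathFrom_liftPath_iff.2 hl, mem_liftPath.2 hmem⟩

lemma isAppendageNode_prnAdj_iff {v : V} {b : Bool} :
    IsAppendageNode (prnAdj E) (ι, false) (o, true) (v, b) ↔ IsAppendageNode E ι o v :=
  not_congr isSimpleNode_prnAdj_iff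

section Reachability

local notation "A" => appendageAdj E ι o
local notation "Aℛ" => appendageAdj (prnAdj E) (ι, false) (o, true)

lemma appendageAdj_prnAdj_false_true {v : V} (hv : IsAppendageNode E ι o v) :
    Aℛ (v, false) (v, true) :=
  ⟨Or.inl ⟨rfl, rfl, rfl⟩, isAppendageNode_prnAdj_iff.2 hv, isAppendageNode_prnAdj_iff.2 hv⟩

lemma appendageAdj.prnAdj_true_false {a b : V} (h : A a b) : Aℛ (a, true) (b, false) :=
  ⟨Or.inr ⟨h.1, rfl, rfl⟩, isAppendageNode_prnAdj_iff.2 h.2.1, isAppendageNode_prnAdj_iff.2 h.2.2⟩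

lemma Relation.ReflTransGen.fst_of_appendageAdj_prnAdj {x y : V × Bool}
    (h : ReflTransGen Aℛ x y) : ReflTransGen A x.1 y.1 := by
  induction h with
  | refl => exact .refl
  | tail _ hstep ih =>
    obtain ⟨hadj, hx, hy⟩ := hstep
    rcases hadj with ⟨heq, -, -⟩ | ⟨hE, -, -⟩
    · exact heq ▸ ih
    · exact ih.tail ⟨hE, isAppendageNode_prnAdj_iff.1 hx, isAppendageNode_prnAdj_iff.1 hy⟩

lemma Relation.ReflTransGen.prnAdj_false_false {a b : V} (h : ReflTransGen A a b) :
    ReflTransGen Aℛ (a, false) (b, false) := by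
  induction h using ReflTransGen.head_induction_on with
  | refl => exact .refl
  | head hstep _ ih =>
    exact .head (appendageAdj_prnAdj_false_true hstep.2.1) (.head hstep.prnAdj_true_false ih)

lemma Relation.TransGen.prnAdj_true_false {a b : V} (h : TransGen A a b) :
    ReflTransGen Aℛ (a, true) (b, false) := by
  obtain ⟨c, hac, hcb⟩ := TransGen.head'_iff.1 h
  exact .head hac.prnAdj_true_false hcb.prnAdj_false_false

lemma Relation.TransGen.isAppendageNode_left {a b : V} (h : TransGen A a b) :
    IsAppendageNode E ι o a :=
  (TransGen.head'_iff.1 h).choose_spec.1.2.1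

end Reachability

lemma PathEquiv.symm {a b : V} (h : PathEquiv E ι o a b) : PathEquiv E ι o b a :=
  ⟨h.2, h.1⟩

lemma PathEquiv.trans {a b c : V} (hab : PathEquiv E ι o a b) (hbc : PathEquiv E ι o b c) :
    PathEquiv E ι o a c :=
  ⟨hab.1.trans hbc.1, hbc.2.trans hab.2⟩

lemma PathEquiv.prnAdj_of_ne {σ τ : V} (hne : σ ≠ τ) (h : PathEquiv E ι o σ τ) :
    ∀ x ∈ ({(σ, false), (σ, true), (τ, false), (τ, true)} : Set (V × Bool)),
      PathEquiv (prnAdj E) (ι, false) (o, true) (σ, false) x := by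
  have hστ : TransGen (appendageAdj E ι o) σ τ :=
    (reflTransGen_iff_eq_or_transGen.1 h.1).resolve_left hne.symm
  have hτσ : TransGen (appendageAdj E ι o) τ σ :=
    (reflTransGen_iff_eq_or_transGen.1 h.2).resolve_left hne
  have r01 := ReflTransGen.single (appendageAdj_prnAdj_false_true hστ.isAppendageNode_left)
  have r12 := hστ.prnAdj_true_false
  have r23 := ReflTransGen.single (appendageAdj_prnAdj_false_true hτσ.isAppendageNode_left)
  have r30 := hτσ.prnAdj_true_false
  rintro x (rfl | rfl | rfl | rfl)
  · exact ⟨.refl, .refl⟩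
  · exact ⟨r01, r12.trans (r23.trans r30)⟩
  · exact ⟨r01.trans r12, r23.trans r30⟩
  · exact ⟨r01.trans (r12.trans r23), r30⟩

end

theorem stmt_12_general {V : Type*} (E : V → V → Prop) (ι o σ τ : V)
    (hne : σ ≠ τ) :
    PathEquiv E ι o σ τ ↔
      (∀ x ∈ ({(σ, false), (σ, true), (τ, false), (τ, true)} : Set (V × Bool)),
       ∀ y ∈ ({(σ, false), (σ, true), (τ, false), (τ, true)} : Set (V × Bool)),
        PathEquiv (prnAdj E) (ι, false) (o, true) x y) := by
  constructor
  · intro h x hx y hy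
    exact (h.prnAdj_of_ne hne x hx).symm.trans (h.prnAdj_of_ne hne y hy)
  · intro h
    obtain ⟨hστ, hτσ⟩ := h (σ, false) (by simp) (τ, false) (by simp)
    exact ⟨hστ.fst_of_appendageAdj_prnAdj, hτσ.fst_of_appendageAdj_prnAdj⟩

/-- Distinct appendage nodes `σ, τ` of the GRN are path-equivalent in
the appendage subnetwork of the GRN if and only if the four nodes
`(σ,R), (σ,P), (τ,R), (τ,P)` are pairwise path-equivalent in the appendage
subnetwork of the PRN. -/
theorem stmt_12 {V : Type*} [Fintype V] (E : V → V → Prop) (ι o σ τ : V)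
    (hne : σ ≠ τ)
    (hσ : IsAppendageNode E ι o σ) (hτ : IsAppendageNode E ι o τ) :
    PathEquiv E ι o σ τ ↔
      (∀ x ∈ ({(σ, false), (σ, true), (τ, false), (τ, true)} : Set (V × Bool)),
       ∀ y ∈ ({(σ, false), (σ, true), (τ, false), (τ, true)} : Set (V × Bool)),
        PathEquiv (prnAdj E) (ι, false) (o, true) x y) :=
  stmt_12_general E ι o σ τ hne
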